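/- With notation as before (Y^n a cone over Y^{n-k-1} with vertex P^k, 0 ≤ k ≤ n-3, degree d preserved), N_q(Y^n) = Θ_n^{d,q} if and only if N_q(Y^{n-k-1}) = Θ_{n-k-1}^{d,q}. -/

import Mathlib

/-!
A point of the cone over `Y` with vertex `P^k` is a line whose first `n - k + 1` coordinates lie
in the affine cone of `Y` (the zero tuple giving the vertex), while the last `k + 1` coordinates
are free. Counting affine solutions, the cone has `q^{k+1}` times as many as `Y`, and projectivising
turns this into `N(Y^n) = q^{k+1} N(Y^{n-k-1}) + (q^k + ⋯ + 1)`. Since `Θ` obeys the same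
recursion, the two equalities are equivalent.
-/

open Finset

def theta (q d m : ℕ) : ℕ := (d - 1) * q ^ m + d * q ^ (m - 1) + ∑ i ∈ range (m - 1), q ^ i

theorem theta_add (q d : ℕ) {m : ℕ} (hm : 1 ≤ m) (r : ℕ) :
    theta q d (m + r) = q ^ r * theta q d m + ∑ i ∈ range r, q ^ i := by
  obtain ⟨m, rfl⟩ := Nat.exists_eq_add_of_le' hm
  rw [theta, theta, show m + 1 + r - 1 = r + m by omega, Nat.add_sub_cancel, sum_range_add,
    mul_add, mul_add, mul_sum]
  simp only [pow_add]
  ring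

namespace MvPolynomial.IsHomogeneous

variable {σ R : Type*}

theorem eval_smul [CommSemiring R] {φ : MvPolynomial σ R} {n : ℕ} (hφ : φ.IsHomogeneous n)
    (c : R) (v : σ → R) : eval (c • v) φ = c ^ n * eval v φ := by
  rw [eval_eq, eval_eq, mul_sum]
  refine sum_congr rfl fun s hs => ?_
  have hdeg : ∑ i ∈ s.support, s i = n := by
    simpa [Finsupp.weight_apply, Finsupp.sum] using hφ (mem_support_iff.mp hs)
  simp only [Pi.smul_apply, smul_eq_mul, mul_pow, prod_mul_distrib, prod_pow_eq_pow_sum, hdeg]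
  ring

theorem eval_smul_eq_zero_iff [CommRing R] [IsDomain R] {φ : MvPolynomial σ R} {n : ℕ}
    (hφ : φ.IsHomogeneous n) {c : R} (hc : c ≠ 0) (v : σ → R) :
    eval (c • v) φ = 0 ↔ eval v φ = 0 := by
  rw [hφ.eval_smul, mul_eq_zero, or_iff_right (pow_ne_zero n hc)]

theorem eval_zero [CommSemiring R] {φ : MvPolynomial σ R} {n : ℕ} (hφ : φ.IsHomogeneous n)
    (hn : n ≠ 0) : eval 0 φ = 0 := by
  rw [MvPolynomial.eval_zero, constantCoeff_eq]
  exact hφ.coeff_eq_zero (by simpa using hn.symm)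

end MvPolynomial.IsHomogeneous

theorem Nat.card_subtype_comp_castLE {α : Type*} {m n : ℕ} (h : m ≤ n)
    (P : (Fin m → α) → Prop) :
    Nat.card {v : Fin n → α // P (v ∘ Fin.castLE h)} =
      Nat.card {w // P w} * Nat.card α ^ (n - m) := by
  obtain ⟨r, rfl⟩ := Nat.exists_eq_add_of_le h
  calc Nat.card {v : Fin (m + r) → α // P (v ∘ Fin.castLE h)}
      = Nat.card ({w // P w} × (Fin r → α)) := Nat.card_congr <|
        (Equiv.subtypeEquiv (Fin.appendEquiv m r).symm fun v => Iff.rfl).trans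
          Equiv.prodSubtypeFstEquivSubtypeProd
    _ = _ := by rw [Nat.card_prod, Nat.card_fun, Nat.card_fin, Nat.add_sub_cancel_left]

namespace Projectivization

open scoped LinearAlgebra.Projectivization

variable {K V : Type*} [Field K] [AddCommGroup V] [Module K V]

theorem card_subtype_ne_zero_and (P : V → Prop)
    (hP : ∀ (a : Kˣ) (v : V), P (a • v) ↔ P v) :
    Nat.card {v : V // v ≠ 0 ∧ P v} = Nat.card {x : ℙ K V // P x.rep} * Nat.card Kˣ := by
  have hmk (v : V) (hv : v ≠ 0) : P v ↔ P (mk K v hv).rep := by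
    obtain ⟨a, ha⟩ := exists_smul_eq_mk_rep K v hv
    rw [← ha, hP]
  rw [← Nat.card_prod]
  exact Nat.card_congr <|
    (Equiv.subtypeSubtypeEquivSubtypeInter (· ≠ 0) P).symm.trans <|
      (Equiv.subtypeEquiv (nonZeroEquivProjectivizationProdUnits K V) fun v => hmk v.1 v.2).trans
        Equiv.prodSubtypeFstEquivSubtypeProd

theorem card_subtype_eq_card_mul_add_one [Finite V] (P : V → Prop)
    (hP : ∀ (a : Kˣ) (v : V), P (a • v) ↔ P v) (hP0 : P 0) :
    Nat.card {v : V // P v} = Nat.card {x : ℙ K V // P x.rep} * Nat.card Kˣ + 1 := by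
  have hins : {v | P v} = insert 0 {v | v ≠ 0 ∧ P v} := by
    ext v
    by_cases hv : v = 0 <;> simp [hv, hP0]
  rw [← card_subtype_ne_zero_and P hP, ← Set.coe_ofPred, Nat.card_coe_set_eq, hins,
    Set.ncard_insert_of_notMem (fun h => h.1 rfl), ← Nat.card_coe_set_eq, Set.coe_ofPred]

theorem card_subtype_rep_comp_castLE [Finite K] {m n : ℕ} (h : m ≤ n)
    (P : (Fin m → K) → Prop) (hP : ∀ (a : Kˣ) (w : Fin m → K), P (a • w) ↔ P w)
    (hP0 : P 0) :
    Nat.card {x : ℙ K (Fin n → K) // P (x.rep ∘ Fin.castLE h)} =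
      Nat.card K ^ (n - m) * Nat.card {y : ℙ K (Fin m → K) // P y.rep} +
        ∑ i ∈ range (n - m), Nat.card K ^ i := by
  set c := Nat.card Kˣ
  have hK : Nat.card K = c + 1 := Nat.card_eq_card_units_add_one K
  have hc : 0 < c := Nat.card_pos
  have key := Nat.card_subtype_comp_castLE h P
  rw [card_subtype_eq_card_mul_add_one _ (fun a v => hP a (v ∘ Fin.castLE h)) hP0,
    card_subtype_eq_card_mul_add_one P hP hP0, hK] at key
  rw [hK]
  refine Nat.eq_of_mul_eq_mul_right hc (Nat.add_right_cancel (m := 1) ?_)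
  rw [key, ← geom_sum_mul_add c (n - m)]
  ring

end Projectivization

/-- for the cone `Y^n` over `Y^{n-k-1}` with vertex `P^k`,
`N_q(Y^n) = Θ_n^{d,q}` iff `N_q(Y^{n-k-1}) = Θ_{n-k-1}^{d,q}`. -/
theorem stmt4 (q d n k : ℕ) (hk : k + 3 ≤ n) (hd : 2 ≤ d)
    (K : Type*) [Field K] [Fintype K] (hK : Fintype.card K = q)
    (G : MvPolynomial (Fin (n - k + 1)) K) (hG : G.IsHomogeneous d) :
    (Nat.card {x : Projectivization K (Fin (n + 2) → K) |
        MvPolynomial.eval x.rep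
          (MvPolynomial.rename (Fin.castLE (by omega)) G) = 0} =
      (d - 1) * q ^ n + d * q ^ (n - 1) + ∑ i ∈ Finset.range (n - 1), q ^ i) ↔
    (Nat.card {y : Projectivization K (Fin (n - k + 1) → K) |
        MvPolynomial.eval y.rep G = 0} =
      (d - 1) * q ^ (n - k - 1) + d * q ^ (n - k - 2) +
        ∑ i ∈ Finset.range (n - k - 2), q ^ i) := by
  have hcone := Projectivization.card_subtype_rep_comp_castLE (by omega : n - k + 1 ≤ n + 2)
    (fun w => MvPolynomial.eval w G = 0)
    (fun a w => hG.eval_smul_eq_zero_iff a.ne_zero w) (hG.eval_zero (by omega))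
  have htheta := theta_add q d (m := n - k - 1) (by omega) (k + 1)
  rw [show n - k - 1 + (k + 1) = n by omega] at htheta
  have hq : 0 < q := hK ▸ Fintype.card_pos
  simp only [Set.coe_ofPred, MvPolynomial.eval_rename]
  rw [hcone, Nat.card_eq_fintype_card, hK, show n + 2 - (n - k + 1) = k + 1 by omega,
    show n - k - 2 = n - k - 1 - 1 by omega]
  change _ = theta q d n ↔ _ = theta q d (n - k - 1)
  rw [htheta, Nat.add_right_cancel_iff, Nat.mul_left_cancel_iff (pow_pos hq _)]
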